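/- Let n ≥ 1 and 0 ≤ s ≤ n. The cofactor A_{n,s} of the entry in position (n,s) of the Hankel matrix H_n = (s_{i+j})_{0 ≤ i,j ≤ n}, i.e. A_{n,s} = (−1)^{n+s} times the determinant of the n×n matrix obtained from H_n by deleting the row with index n and the column with index s, satisfies A_{n,s} = ((−1)^{n−s}/((q;q)_n·(p;q)_s)) · [n choose s]_q · D_n · q^{(n+1)(2n+1)/2} · q^{s²+s/2}, where D_n = det(H_n). -/

import Mathlib

/-- Finite q-shifted factorial `(z;q)_n`. -/
noncomputable def qp (z q : ℝ) (n : ℕ) : ℝ := ∏ k ∈ Finset.range n, (1 - z * q ^ k)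

/-- Gaussian q-binomial coefficient. -/
noncomputable def qbinom (q : ℝ) (n k : ℕ) : ℝ := qp q q n / (qp q q k * qp q q (n - k))

/-- Generalized Stieltjes–Wigert moments `s_n = (p;q)_n q^{-(n+1)²/2}`. -/
noncomputable def sw (p q : ℝ) (n : ℕ) : ℝ := qp p q n * q ^ (-(((n : ℝ) + 1) ^ 2) / 2)

/-- Hankel determinant `D_n = det (s_{i+j})_{0 ≤ i,j ≤ n}`. -/
noncomputable def hD (p q : ℝ) (n : ℕ) : ℝ :=
  (Matrix.of fun i j : Fin (n + 1) => sw p q ((i : ℕ) + (j : ℕ))).det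

/-!
The claimed values `c_s = A_{n,s} / D_n` form the last column of `H_n⁻¹`. It suffices to check
`∑_s s_{i+s} c_s = δ_{i,n}` for `i ≤ n`: then `adj H_n * H_n = D_n • 1` turns the last column of
`adj H_n`, i.e. the cofactors `A_{n,s}`, into `D_n c_s`, with no need to know `D_n ≠ 0`.

For the sum, write `(p;q)_{i+s} = (p;q)_s (p q^s;q)_i`; the powers of `q` combine to
`q^{binom(s,2)} q^{-is}` up to a factor independent of `s`. Expanding `(p q^s;q)_i` by the
q-binomial theorem and exchanging the sums, the inner sum over `s` is again a q-binomial sum,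
namely `(q^{t-i};q)_n`, which vanishes except for `t = 0`, `i = n`.
-/

open Finset Matrix

lemma Nat.choose_two_succ (m : ℕ) : (m + 1).choose 2 = m.choose 2 + m := by
  rw [Nat.choose_succ_succ, Nat.choose_one_right, add_comm]

section QPochhammer

variable {z q : ℝ}

@[simp]
lemma qp_zero (z q : ℝ) : qp z q 0 = 1 := prod_range_zero _

lemma qp_succ (z q : ℝ) (m : ℕ) : qp z q (m + 1) = qp z q m * (1 - z * q ^ m) :=
  prod_range_succ _ _

lemma qp_add (z q : ℝ) (m k : ℕ) : qp z q (m + k) = qp z q m * qp (z * q ^ m) q k := by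
  simp only [qp, prod_range_add, pow_add, mul_assoc]

lemma qp_succ' (z q : ℝ) (m : ℕ) : qp z q (m + 1) = (1 - z) * qp (z * q) q m := by
  rw [add_comm, qp_add, pow_one, qp_succ, qp_zero, one_mul, pow_zero, mul_one]

lemma qp_pos (hq0 : 0 ≤ q) (hq1 : q ≤ 1) (hz : z < 1) (m : ℕ) : 0 < qp z q m := by
  refine prod_pos fun k _ => ?_
  have h0 : 0 ≤ q ^ k := pow_nonneg hq0 k
  have h1 : q ^ k ≤ 1 := pow_le_one₀ hq0 hq1
  rcases le_or_gt z 0 with hz0 | hz0 <;> nlinarith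

lemma qp_eq_zero_of_mul_pow_eq_one {k m : ℕ} (hkm : k < m) (h : z * q ^ k = 1) : qp z q m = 0 :=
  prod_eq_zero (mem_range.mpr hkm) (sub_eq_zero.mpr h.symm)

lemma qp_inv_pow_self (hq : q ≠ 0) (m : ℕ) :
    qp (q⁻¹ ^ m) q m = (-1) ^ m * qp q q m / q ^ (m + 1).choose 2 := by
  induction m with
  | zero => simp
  | succ m ih =>
    rw [qp_succ', pow_succ, mul_assoc, inv_mul_cancel₀ hq, mul_one, ih, qp_succ,
      Nat.choose_two_succ (m + 1), pow_add, inv_pow]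
    field_simp
    ring

end QPochhammer

section QBinomial

variable {q : ℝ} (hq : ∀ k, qp q q k ≠ 0)
include hq

lemma qbinom_zero_right (m : ℕ) : qbinom q m 0 = 1 := by
  rw [qbinom, Nat.sub_zero, qp_zero, one_mul, div_self (hq m)]

lemma qbinom_self (m : ℕ) : qbinom q m m = 1 := by
  rw [qbinom, Nat.sub_self, qp_zero, mul_one, div_self (hq m)]

lemma qbinom_succ_succ {m s : ℕ} (hsm : s < m) :
    qbinom q (m + 1) (s + 1) = qbinom q m (s + 1) + q ^ (m - s) * qbinom q m s := by
  obtain ⟨r, rfl⟩ := Nat.exists_eq_add_of_lt hsm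
  simp only [qbinom, show s + r + 1 + 1 - (s + 1) = r + 1 by omega,
    show s + r + 1 - (s + 1) = r by omega, show s + r + 1 - s = r + 1 by omega]
  have hs := hq s
  have hr := hq r
  have hs1 := right_ne_zero_of_mul (qp_succ q q s ▸ hq (s + 1))
  have hr1 := right_ne_zero_of_mul (qp_succ q q r ▸ hq (r + 1))
  rw [qp_succ q q (s + r + 1), qp_succ q q s, qp_succ q q r, pow_add, pow_add]
  field_simp
  ring

lemma qbinom_coeff_succ_succ {m s : ℕ} (hsm : s < m) :
    (-1) ^ (s + 1) * qbinom q (m + 1) (s + 1) * q ^ (s + 1).choose 2 =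
      (-1) ^ (s + 1) * qbinom q m (s + 1) * q ^ (s + 1).choose 2
        - q ^ m * ((-1) ^ s * qbinom q m s * q ^ s.choose 2) := by
  have hqm : q ^ m = q ^ s * q ^ (m - s) := by rw [← pow_add, Nat.add_sub_cancel' hsm.le]
  rw [qbinom_succ_succ hq hsm, Nat.choose_two_succ, hqm, pow_add]
  ring

theorem qp_eq_sum_qbinom (z : ℝ) (m : ℕ) :
    qp z q m = ∑ s ∈ range (m + 1), (-1) ^ s * qbinom q m s * q ^ s.choose 2 * z ^ s := by
  induction m with
  | zero => simp [qbinom_self hq]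
  | succ m ih =>
    have head := sum_range_succ' (fun s => (-1) ^ s * qbinom q m s * q ^ s.choose 2 * z ^ s) m
    have last := sum_range_succ (fun s => (-1) ^ s * qbinom q m s * q ^ s.choose 2 * z ^ s) m
    have middle : ∀ s ∈ range m,
        (-1) ^ (s + 1) * qbinom q (m + 1) (s + 1) * q ^ (s + 1).choose 2 * z ^ (s + 1) =
          (-1) ^ (s + 1) * qbinom q m (s + 1) * q ^ (s + 1).choose 2 * z ^ (s + 1)
            - z * q ^ m * ((-1) ^ s * qbinom q m s * q ^ s.choose 2 * z ^ s) := fun s hs => by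
      rw [qbinom_coeff_succ_succ hq (mem_range.mp hs)]
      ring
    conv_rhs =>
      rw [sum_range_succ', sum_range_succ, sum_congr rfl middle, sum_sub_distrib, ← mul_sum]
    rw [qp_succ, ih]
    simp only [qbinom_self hq, qbinom_zero_right hq, Nat.choose_two_succ,
      Nat.choose_zero_succ] at head last ⊢
    linear_combination head - z * q ^ m * last

theorem sum_qbinom_mul_qp_eq (hq0 : q ≠ 0) (p : ℝ) {i m : ℕ} (him : i ≤ m) :
    ∑ s ∈ range (m + 1),
        (-1) ^ s * qbinom q m s * q ^ s.choose 2 * (q⁻¹ ^ i) ^ s * qp (p * q ^ s) q i =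
      if i = m then (-1) ^ m * qp q q m / q ^ (m + 1).choose 2 else 0 := by
  have expand : ∀ s ∈ range (m + 1),
      (-1) ^ s * qbinom q m s * q ^ s.choose 2 * (q⁻¹ ^ i) ^ s * qp (p * q ^ s) q i =
        ∑ t ∈ range (i + 1), (-1) ^ t * qbinom q i t * q ^ t.choose 2 * p ^ t *
          ((-1) ^ s * qbinom q m s * q ^ s.choose 2 * (q⁻¹ ^ i * q ^ t) ^ s) := fun s _ => by
    rw [qp_eq_sum_qbinom hq, mul_sum]
    refine sum_congr rfl fun t _ => ?_
    rw [mul_pow, mul_pow, ← pow_mul, ← pow_mul, mul_comm s t]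
    ring
  rw [sum_congr rfl expand, sum_comm]
  simp_rw [← mul_sum, ← qp_eq_sum_qbinom hq]
  have inv_pow_mul_pow {t : ℕ} (hti : t ≤ i) : q⁻¹ ^ i * q ^ t * q ^ (i - t) = 1 := by
    rw [mul_assoc, ← pow_add, Nat.add_sub_cancel' hti, inv_pow,
      inv_mul_cancel₀ (pow_ne_zero i hq0)]
  rw [sum_eq_single_of_mem 0 (by simp)]
  · simp only [qbinom_zero_right hq, Nat.choose_zero_succ, pow_zero, mul_one, one_mul]
    split_ifs with h
    · rw [h, qp_inv_pow_self hq0]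
    · have hi := inv_pow_mul_pow i.zero_le
      rw [pow_zero, mul_one] at hi
      rw [qp_eq_zero_of_mul_pow_eq_one (lt_of_le_of_ne him h) hi]
  · intro t ht ht0
    have hti := Nat.lt_succ_iff.mp (mem_range.mp ht)
    rw [qp_eq_zero_of_mul_pow_eq_one (by omega) (inv_pow_mul_pow hti), mul_zero]

end QBinomial

noncomputable def hankelInvLastCol (p q : ℝ) (n s : ℕ) : ℝ :=
  (-1) ^ (n - s) / (qp q q n * qp p q s) * qbinom q n s *
    q ^ ((((n : ℝ) + 1) * (2 * (n : ℝ) + 1)) / 2) * q ^ ((s : ℝ) ^ 2 + (s : ℝ) / 2)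

lemma sw_add_mul_hankelInvLastCol {p q : ℝ} (hq : 0 < q) {i n s : ℕ} (hs : s ≤ n)
    (hp : qp p q s ≠ 0) :
    sw p q (i + s) * hankelInvLastCol p q n s =
      (-1) ^ n * q ^ (((n + 1) * (2 * n + 1) - ((i : ℝ) + 1) ^ 2) / 2) / qp q q n *
        ((-1) ^ s * qbinom q n s * q ^ s.choose 2 * (q⁻¹ ^ i) ^ s * qp (p * q ^ s) q i) := by
  have hexp : q ^ (-(((i + s : ℕ) : ℝ) + 1) ^ 2 / 2) * q ^ ((((n : ℝ) + 1) * (2 * n + 1)) / 2) *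
        q ^ ((s : ℝ) ^ 2 + s / 2) =
      q ^ (((n + 1) * (2 * n + 1) - ((i : ℝ) + 1) ^ 2) / 2) * q ^ s.choose 2 * (q⁻¹ ^ i) ^ s := by
    rw [← pow_mul, inv_pow, ← Real.rpow_natCast q (s.choose 2), ← Real.rpow_natCast q (i * s),
      ← Real.rpow_neg hq.le, ← Real.rpow_add hq, ← Real.rpow_add hq, ← Real.rpow_add hq,
      ← Real.rpow_add hq]
    congr 1
    push_cast [Nat.cast_choose_two]
    ring
  have hsign : (-1 : ℝ) ^ (n - s) = (-1) ^ n * (-1) ^ s := by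
    rw [pow_sub₀ _ (by norm_num) hs, ← inv_pow, inv_neg_one]
  calc sw p q (i + s) * hankelInvLastCol p q n s
      = (-1) ^ n / qp q q n * ((-1) ^ s * qbinom q n s * qp (p * q ^ s) q i) *
          (qp p q s / qp p q s) *
          (q ^ (-(((i + s : ℕ) : ℝ) + 1) ^ 2 / 2) * q ^ ((((n : ℝ) + 1) * (2 * n + 1)) / 2) *
            q ^ ((s : ℝ) ^ 2 + s / 2)) := by
        rw [sw, hankelInvLastCol, add_comm i s, qp_add, hsign, add_comm s i]
        ring
    _ = _ := by
        rw [div_self hp, hexp]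
        ring

lemma sum_sw_mul_hankelInvLastCol {p q : ℝ} (hp : p < 1) (hq0 : 0 < q) (hq1 : q < 1) {i n : ℕ}
    (hin : i ≤ n) :
    ∑ s ∈ range (n + 1), sw p q (i + s) * hankelInvLastCol p q n s = if i = n then 1 else 0 := by
  have hqq : ∀ k, qp q q k ≠ 0 := fun k => (qp_pos hq0.le hq1.le hq1 k).ne'
  rw [sum_congr rfl fun s hs => sw_add_mul_hankelInvLastCol hq0
    (Nat.lt_succ_iff.mp (mem_range.mp hs)) (qp_pos hq0.le hq1.le hp s).ne', ← mul_sum,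
    sum_qbinom_mul_qp_eq hqq hq0.ne' p hin]
  split_ifs with h
  · subst h
    have hexp :
        q ^ ((((i : ℝ) + 1) * (2 * i + 1) - ((i : ℝ) + 1) ^ 2) / 2) = q ^ (i + 1).choose 2 := by
      rw [← Real.rpow_natCast q ((i + 1).choose 2)]
      congr 1
      push_cast [Nat.cast_choose_two]
      ring
    have hqi := hqq i
    rw [hexp]
    field_simp
    rw [← pow_mul, pow_mul', neg_one_sq, one_pow]
  · rw [mul_zero]

lemma hankel_mulVec_hankelInvLastCol {p q : ℝ} (hp : p < 1) (hq0 : 0 < q) (hq1 : q < 1) (n : ℕ) :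
    (Matrix.of fun i j : Fin (n + 1) => sw p q ((i : ℕ) + (j : ℕ))) *ᵥ
        (fun j => hankelInvLastCol p q n j) = Pi.single (Fin.last n) 1 := by
  ext i
  simp only [mulVec, dotProduct, of_apply]
  rw [Fin.sum_univ_eq_sum_range (fun k => sw p q (i + k) * hankelInvLastCol p q n k),
    sum_sw_mul_hankelInvLastCol hp hq0 hq1 (Nat.lt_succ_iff.mp i.isLt)]
  simp [Pi.single_apply, Fin.ext_iff]

lemma Matrix.adjugate_apply_eq_det_mul_of_mulVec_eq_single {ι R : Type*} [Fintype ι]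
    [DecidableEq ι] [CommRing R] {A : Matrix ι ι R} {w : ι → R} {i : ι}
    (h : A *ᵥ w = Pi.single i 1) (j : ι) :
    A.adjugate j i = A.det * w j := by
  have := congrFun (congrArg (A.adjugate *ᵥ ·) h) j
  simpa [mulVec_mulVec, adjugate_mul, smul_mulVec, one_mulVec] using this.symm

theorem stmt_6_general (p q : ℝ) (hp1 : p < 1) (hq0 : 0 < q) (hq1 : q < 1)
    (n s : ℕ) (hs : s ≤ n) :
    (-1 : ℝ) ^ (n + s) *
      ((Matrix.of fun i j : Fin (n + 1) => sw p q ((i : ℕ) + (j : ℕ))).submatrix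
        (Fin.succAbove (Fin.last n))
        (Fin.succAbove ⟨s, Nat.lt_succ_of_le hs⟩)).det
      = (-1 : ℝ) ^ (n - s) / (qp q q n * qp p q s) * qbinom q n s * hD p q n *
          q ^ ((((n : ℝ) + 1) * (2 * (n : ℝ) + 1)) / 2) *
          q ^ ((s : ℝ) ^ 2 + (s : ℝ) / 2) := by
  have h := Matrix.adjugate_apply_eq_det_mul_of_mulVec_eq_single
    (hankel_mulVec_hankelInvLastCol hp1 hq0 hq1 n) (j := ⟨s, Nat.lt_succ_of_le hs⟩)
  rw [adjugate_fin_succ_eq_det_submatrix, Fin.val_last] at h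
  rw [h, hD, hankelInvLastCol]
  ring

theorem stmt_6 (p q : ℝ) (hp0 : 0 ≤ p) (hp1 : p < 1) (hq0 : 0 < q) (hq1 : q < 1)
    (n s : ℕ) (hn : 1 ≤ n) (hs : s ≤ n) :
    (-1 : ℝ) ^ (n + s) *
      ((Matrix.of fun i j : Fin (n + 1) => sw p q ((i : ℕ) + (j : ℕ))).submatrix
        (Fin.succAbove (Fin.last n))
        (Fin.succAbove ⟨s, Nat.lt_succ_of_le hs⟩)).det
      = (-1 : ℝ) ^ (n - s) / (qp q q n * qp p q s) * qbinom q n s * hD p q n *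
          q ^ ((((n : ℝ) + 1) * (2 * (n : ℝ) + 1)) / 2) *
          q ^ ((s : ℝ) ^ 2 + (s : ℝ) / 2) :=
  stmt_6_general p q hp1 hq0 hq1 n s hs
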